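/- In the flower game with k petals, the strategy for Eve that returns to the heart the first time Adam chooses each petal, and stops the play (moving to the vertex colored with all colors but i) the second time Adam chooses petal i, is winning; it can be implemented with 2^k − 1 memory states by tracking the set of petals visited (dropping the full set). -/

import Mathlib

/-- An arena: a directed graph with every vertex having a successor,
and a partition of vertices between Eve (`eve v`) and Adam (`¬ eve v`). -/
structure Arena (V : Type) where
  E : V → V → Prop
  eve : V → Prop
  succ_exists : ∀ v, ∃ w, E v w

variable {V M : Type}

/-- A play from `v0`: an infinite path starting at `v0`. -/
def IsPlay (A : Arena V) (v0 : V) (π : ℕ → V) : Prop :=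
  π 0 = v0 ∧ ∀ n, A.E (π n) (π (n + 1))

/-- The finite history of a play up to time `n` (inclusive). -/
def hist (π : ℕ → V) (n : ℕ) : List V :=
  List.ofFn (fun i : Fin (n + 1) => π i)

/-- A strategy (a function from histories to vertices) is legal if it always moves along edges. -/
def Legal (A : Arena V) (σ : List V → V) : Prop :=
  ∀ (l : List V) (v : V), A.E v (σ (l ++ [v]))

/-- A play is consistent with Eve's strategy `σ`. -/
def ConsistentEve (A : Arena V) (σ : List V → V) (π : ℕ → V) : Prop :=
  ∀ n, A.eve (π n) → π (n + 1) = σ (hist π n)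

/-- A play is consistent with Adam's strategy `τ`. -/
def ConsistentAdam (A : Arena V) (τ : List V → V) (π : ℕ → V) : Prop :=
  ∀ n, ¬ A.eve (π n) → π (n + 1) = τ (hist π n)

/-- The generalized reachability objective: visit each `F i` at least once. -/
def GenReach {k : ℕ} (F : Fin k → Set V) (π : ℕ → V) : Prop :=
  ∀ i, ∃ n, π n ∈ F i

/-- Eve wins the generalized reachability game from `v0`. -/
def EveWinsGenReach {k : ℕ} (A : Arena V) (F : Fin k → Set V) (v0 : V) : Prop :=
  ∃ σ, Legal A σ ∧ ∀ π, IsPlay A v0 π → ConsistentEve A σ π → GenReach F π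

/-- Adam wins the generalized reachability game from `v0`. -/
def AdamWinsGenReach {k : ℕ} (A : Arena V) (F : Fin k → Set V) (v0 : V) : Prop :=
  ∃ τ, Legal A τ ∧ ∀ π, IsPlay A v0 π → ConsistentAdam A τ π → ¬ GenReach F π

/-- One step of the attractor computation. -/
def AttrStep (A : Arena V) (X : Set V) : Set V :=
  X ∪ {u | A.eve u ∧ ∃ v, A.E u v ∧ v ∈ X} ∪ {u | ¬ A.eve u ∧ ∀ v, A.E u v → v ∈ X}

/-- The attractor sequence `Attr_i(F)`. -/
def AttrSeq (A : Arena V) (F : Set V) : ℕ → Set V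
  | 0 => F
  | n + 1 => AttrStep A (AttrSeq A F n)

/-- The attractor `Attr(F)`: union of the attractor sequence. -/
def Attr (A : Arena V) (F : Set V) : Set V := ⋃ n, AttrSeq A F n

/-- A memory structure: initial memory state and update function on edges. -/
structure MemStruct (V M : Type) where
  m0 : M
  upd : M → V → V → M

/-- The sequence of memory states along a play. -/
def memTrace (μ : MemStruct V M) (π : ℕ → V) : ℕ → M
  | 0 => μ.m0
  | n + 1 => μ.upd (memTrace μ π n) (π n) (π (n + 1))

/-- A next-move function is legal if it always moves along edges. -/
def MemLegal (A : Arena V) (ν : V → M → V) : Prop :=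
  ∀ v m, A.E v (ν v m)

/-- Consistency of a play with Eve's finite-memory strategy `(μ, ν)`. -/
def MemConsistentEve (A : Arena V) (μ : MemStruct V M) (ν : V → M → V) (π : ℕ → V) : Prop :=
  ∀ n, A.eve (π n) → π (n + 1) = ν (π n) (memTrace μ π n)

/-- Consistency of a play with Adam's finite-memory strategy `(μ, ν)`. -/
def MemConsistentAdam (A : Arena V) (μ : MemStruct V M) (ν : V → M → V) (π : ℕ → V) : Prop :=
  ∀ n, ¬ A.eve (π n) → π (n + 1) = ν (π n) (memTrace μ π n)

/-- Eve wins with the finite-memory strategy `(μ, ν)` from `v0`. -/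
def EveWinsWithMem {k : ℕ} (A : Arena V) (F : Fin k → Set V) (v0 : V)
    (μ : MemStruct V M) (ν : V → M → V) : Prop :=
  MemLegal A ν ∧ ∀ π, IsPlay A v0 π → MemConsistentEve A μ ν π → GenReach F π

/-- Adam wins with the finite-memory strategy `(μ, ν)` from `v0`. -/
def AdamWinsWithMem {k : ℕ} (A : Arena V) (F : Fin k → Set V) (v0 : V)
    (μ : MemStruct V M) (ν : V → M → V) : Prop :=
  MemLegal A ν ∧ ∀ π, IsPlay A v0 π → MemConsistentAdam A μ ν π → ¬ GenReach F π


/-- The flower arena's vertices: the heart, the petals `v_i`, the return vertices `b_i`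
and the sinks `c_i`. -/
inductive Flower (k : ℕ)
  | heart
  | petal (i : Fin k)
  | back (i : Fin k)
  | sink (i : Fin k)
deriving DecidableEq

/-- Edges of the flower arena. -/
def flowerE {k : ℕ} : Flower k → Flower k → Prop
  | .heart, .petal _ => True
  | .petal i, .back j => i = j
  | .petal i, .sink j => i = j
  | .back _, .heart => True
  | .sink i, .sink j => i = j
  | _, _ => False

/-- The flower arena: Adam owns the heart, Eve owns the petals. -/
def flowerArena (k : ℕ) (hk : 0 < k) : Arena (Flower k) where
  E := flowerE
  eve := fun v => ∃ i, v = Flower.petal i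
  succ_exists := fun v => by
    cases v with
    | heart => exact ⟨Flower.petal ⟨0, hk⟩, trivial⟩
    | petal i => exact ⟨Flower.back i, rfl⟩
    | back i => exact ⟨Flower.heart, trivial⟩
    | sink i => exact ⟨Flower.sink i, rfl⟩

/-- The reachability sets of the flower game: `b_i` has color `i` only, and the sink
`c_j` has every color except `j`. -/
def flowerF (k : ℕ) : Fin k → Set (Flower k) :=
  fun i => {v | v = Flower.back i ∨ ∃ j, j ≠ i ∧ v = Flower.sink j}

/-- Memory states for Eve's strategy in the flower game: the proper subsets of petals
already chosen by Adam (the full set is dropped). -/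
abbrev FlowerMem (k : ℕ) := {S : Finset (Fin k) // S ≠ Finset.univ}

/-- The memory structure tracking (strictly) the set of petals chosen by Adam so far. -/
def flowerMu (k : ℕ) (hk : 0 < k) : MemStruct (Flower k) (FlowerMem k) where
  m0 := ⟨∅, by
    intro h
    have := Finset.mem_univ (⟨0, hk⟩ : Fin k)
    rw [← h] at this
    simp at this⟩
  upd := fun m v _ =>
    match v with
    | .petal i =>
        if h : insert i m.val = Finset.univ then m else ⟨insert i m.val, h⟩
    | _ => m

/-- Eve's strategy: the first time Adam chooses petal `i`, return to the heart via `b_i`;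
the second time, stop the play by moving to the sink `c_i`. -/
def flowerNu (k : ℕ) (hk : 0 < k) : Flower k → FlowerMem k → Flower k :=
  fun v m =>
    match v with
    | .petal i => if i ∈ m.val then Flower.sink i else Flower.back i
    | .heart => Flower.petal ⟨0, hk⟩
    | .back _ => Flower.heart
    | .sink i => Flower.sink i

/-! Suppose a consistent play never meets `F j`. Memory only ever holds petals `i` whose `b_i`
has already been visited, and `c_j` can only be entered from `v_j` with `j` in memory; so no
sink is ever reached and the play cycles heart → petal → back forever. Each petal Adam picks
is then new to the memory and cannot complete it (`j` is missing), so the memory gains one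
petal per cycle, which is impossible for more than `k` cycles. -/

open Finset

lemma memLegal_flowerNu (k : ℕ) (hk : 0 < k) : MemLegal (flowerArena k hk) (flowerNu k hk) := by
  intro v m
  cases v with
  | petal i => show flowerE _ (ite _ _ _); split_ifs <;> rfl
  | _ => trivial

lemma card_flowerMem (k : ℕ) : Fintype.card (FlowerMem k) = 2 ^ k - 1 := by
  rw [Fintype.card_subtype_compl, Fintype.card_subtype_eq, Fintype.card_finset, Fintype.card_fin]

section FlowerPlay

variable {k : ℕ} {hk : 0 < k} {π : ℕ → Flower k}

lemma exists_eq_petal_of_flowerE_heart {w : Flower k} (h : flowerE .heart w) :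
    ∃ i, w = .petal i := by
  cases w <;> first | exact ⟨_, rfl⟩ | exact h.elim

lemma eq_heart_of_flowerE_back {i : Fin k} {w : Flower k} (h : flowerE (.back i) w) :
    w = .heart := by
  cases w <;> first | rfl | exact h.elim

lemma eq_petal_or_eq_sink_of_flowerE_sink {v : Flower k} {j : Fin k} (h : flowerE v (.sink j)) :
    v = .petal j ∨ v = .sink j := by
  cases v with
  | petal i => exact Or.inl (congrArg _ h)
  | sink i => exact Or.inr (congrArg _ h)
  | _ => exact h.elim

lemma flowerMu_upd_petal_val (m : FlowerMem k) (i : Fin k) (w : Flower k) :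
    ((flowerMu k hk).upd m (.petal i) w).1 = if insert i m.1 = univ then m.1 else insert i m.1 := by
  show (dite _ _ _ : FlowerMem k).1 = _
  split_ifs <;> rfl

lemma flowerMu_upd_of_forall_ne_petal {v : Flower k} (hv : ∀ i, v ≠ .petal i)
    (m : FlowerMem k) (w : Flower k) : (flowerMu k hk).upd m v w = m := by
  cases v with
  | petal i => exact absurd rfl (hv i)
  | _ => rfl

lemma succ_eq_of_eq_petal
    (hc : MemConsistentEve (flowerArena k hk) (flowerMu k hk) (flowerNu k hk) π)
    {n : ℕ} {i : Fin k} (h : π n = .petal i) :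
    π (n + 1) = if i ∈ (memTrace (flowerMu k hk) π n).1 then .sink i else .back i := by
  rw [hc n ⟨i, h⟩, h]
  rfl

lemma exists_eq_back_of_mem_memTrace
    (hc : MemConsistentEve (flowerArena k hk) (flowerMu k hk) (flowerNu k hk) π) :
    ∀ {n : ℕ} {j : Fin k}, j ∈ (memTrace (flowerMu k hk) π n).1 → ∃ t, π t = .back j
  | 0, j, hj => absurd hj (notMem_empty j)
  | n + 1, j, hj => by
    rw [memTrace] at hj
    cases hn : π n with
    | petal i =>
      rw [hn, flowerMu_upd_petal_val] at hj
      have hj' : j = i ∨ j ∈ (memTrace (flowerMu k hk) π n).1 := by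
        split_ifs at hj
        · exact Or.inr hj
        · exact mem_insert.mp hj
      by_cases hjn : j ∈ (memTrace (flowerMu k hk) π n).1
      · exact exists_eq_back_of_mem_memTrace hc hjn
      · obtain rfl := hj'.resolve_right hjn
        exact ⟨n + 1, by rw [succ_eq_of_eq_petal hc hn, if_neg hjn]⟩
    | _ =>
      rw [flowerMu_upd_of_forall_ne_petal (by simp [hn])] at hj
      exact exists_eq_back_of_mem_memTrace hc hj

lemma ne_sink_of_forall_ne_back (hp : IsPlay (flowerArena k hk) .heart π)
    (hc : MemConsistentEve (flowerArena k hk) (flowerMu k hk) (flowerNu k hk) π)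
    {j : Fin k} (hback : ∀ t, π t ≠ .back j) : ∀ n, π n ≠ .sink j
  | 0 => by simp [hp.1]
  | n + 1 => fun h => by
    have hedge : flowerE (π n) (.sink j) := h ▸ hp.2 n
    rcases eq_petal_or_eq_sink_of_flowerE_sink hedge with hn | hn
    · have hmem : j ∈ (memTrace (flowerMu k hk) π n).1 := by
        by_contra hj
        simp [succ_eq_of_eq_petal hc hn, hj] at h
      obtain ⟨t, ht⟩ := exists_eq_back_of_mem_memTrace hc hmem
      exact hback t ht
    · exact ne_sink_of_forall_ne_back hp hc hback n hn

lemma exists_back_cycle_of_eq_heart (hp : IsPlay (flowerArena k hk) .heart π)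
    (hc : MemConsistentEve (flowerArena k hk) (flowerMu k hk) (flowerNu k hk) π)
    (hsink : ∀ n s, π n ≠ .sink s) {t : ℕ} (ht : π t = .heart) :
    ∃ i, π (t + 2) = .back i ∧ π (t + 3) = .heart ∧ i ∉ (memTrace (flowerMu k hk) π t).1 ∧
      (memTrace (flowerMu k hk) π (t + 3)).1 =
        if insert i (memTrace (flowerMu k hk) π t).1 = univ then (memTrace (flowerMu k hk) π t).1
        else insert i (memTrace (flowerMu k hk) π t).1 := by
  obtain ⟨i, hi⟩ := exists_eq_petal_of_flowerE_heart (ht ▸ hp.2 t)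
  have hmem₁ : memTrace (flowerMu k hk) π (t + 1) = memTrace (flowerMu k hk) π t := by
    rw [memTrace, flowerMu_upd_of_forall_ne_petal (by simp [ht])]
  have hfresh : i ∉ (memTrace (flowerMu k hk) π t).1 := fun hmem =>
    hsink (t + 2) i (by rw [succ_eq_of_eq_petal hc hi, hmem₁, if_pos hmem])
  have hb : π (t + 2) = .back i := by rw [succ_eq_of_eq_petal hc hi, hmem₁, if_neg hfresh]
  refine ⟨i, hb, eq_heart_of_flowerE_back (hb ▸ hp.2 (t + 2)), hfresh, ?_⟩
  rw [memTrace, flowerMu_upd_of_forall_ne_petal (by simp [hb]), memTrace, hi,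
    flowerMu_upd_petal_val, hmem₁]

lemma le_card_memTrace (hp : IsPlay (flowerArena k hk) .heart π)
    (hc : MemConsistentEve (flowerArena k hk) (flowerMu k hk) (flowerNu k hk) π)
    (hsink : ∀ n s, π n ≠ .sink s) {j : Fin k} (hback : ∀ n, π n ≠ .back j) :
    ∀ n, π (3 * n) = .heart ∧ n ≤ (memTrace (flowerMu k hk) π (3 * n)).1.card
  | 0 => ⟨hp.1, Nat.zero_le _⟩
  | n + 1 => by
    obtain ⟨hheart, hcard⟩ := le_card_memTrace hp hc hsink hback n
    obtain ⟨i, hb, hheart', hfresh, hmem⟩ := exists_back_cycle_of_eq_heart hp hc hsink hheart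
    have hne : insert i (memTrace (flowerMu k hk) π (3 * n)).1 ≠ univ := fun h => by
      rcases mem_insert.mp (eq_univ_iff_forall.mp h j) with rfl | hj
      · exact hback _ hb
      · obtain ⟨t, ht⟩ := exists_eq_back_of_mem_memTrace hc hj
        exact hback t ht
    rw [if_neg hne] at hmem
    refine ⟨hheart', ?_⟩
    rw [show 3 * (n + 1) = 3 * n + 3 by ring, hmem, card_insert_of_notMem hfresh]
    omega

theorem genReach_flowerF (hp : IsPlay (flowerArena k hk) .heart π)
    (hc : MemConsistentEve (flowerArena k hk) (flowerMu k hk) (flowerNu k hk) π) :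
    GenReach (flowerF k) π := by
  intro j
  by_contra! hj
  have hback : ∀ n, π n ≠ .back j := fun n h => hj n (Or.inl h)
  have hsink : ∀ n s, π n ≠ .sink s := by
    intro n s h
    obtain rfl | hs := eq_or_ne s j
    · exact ne_sink_of_forall_ne_back hp hc hback n h
    · exact hj n (Or.inr ⟨s, hs, h⟩)
  have hcard := (le_card_memTrace hp hc hsink hback (k + 1)).2
  have hle := card_le_univ (memTrace (flowerMu k hk) π (3 * (k + 1))).1
  rw [Fintype.card_fin] at hle
  omega

end FlowerPlay

/-- in the flower game with `k` petals, the "return the first time, stop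
the second time" strategy is winning for Eve, and it uses `2^k - 1` memory states. -/
theorem flower_strategy_winning (k : ℕ) (hk : 0 < k) :
    EveWinsWithMem (flowerArena k hk) (flowerF k) Flower.heart (flowerMu k hk) (flowerNu k hk) ∧
    Fintype.card (FlowerMem k) = 2 ^ k - 1 :=
  ⟨⟨memLegal_flowerNu k hk, fun _ hp hc => genReach_flowerF hp hc⟩, card_flowerMem k⟩
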